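/- Exponential iterated integrals are independent of the parametrization of the path: let d_1, …, d_n, f_{12}, …, f_{(n−1)n} : [0,1] → ℂ be continuous and let φ : [0,1] → [0,1] be continuously differentiable, monotone nondecreasing, with φ(0) = 0 and φ(1) = 1. Then the exponential iterated integral of the reparametrized data, ∫ e^{(d_1∘φ)·φ′} ((f_{12}∘φ)·φ′) e^{(d_2∘φ)·φ′} ⋯ ((f_{(n−1)n}∘φ)·φ′) e^{(d_n∘φ)·φ′}, equals ∫ e^{d_1} f_{12} e^{d_2} ⋯ f_{(n−1)n} e^{d_n}. -/

import Mathlib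

open MeasureTheory Set

/-- The simplex `{t | a ≤ t 0 ≤ t 1 ≤ ⋯ ≤ t (n-1) ≤ b}`. -/
def simplexSet (a b : ℝ) (n : ℕ) : Set (Fin n → ℝ) :=
  {t | (∀ i, a ≤ t i ∧ t i ≤ b) ∧ ∀ i j : Fin n, i ≤ j → t i ≤ t j}

/-- The iterated integral `∫_{a ≤ t_1 ≤ ⋯ ≤ t_n ≤ b} w_1(t_1) ⋯ w_n(t_n)` of a word
`w` of complex-valued functions; it equals `1` for the empty word. -/
noncomputable def itIntL (a b : ℝ) (w : List (ℝ → ℂ)) : ℂ :=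
  ∫ t in simplexSet a b w.length, ∏ i : Fin w.length, w.get i (t i)

/-- The word `d_0^{m_0} f_0 d_1^{m_1} f_1 ⋯ f_{n-1} d_n^{m_n}` (with `d_i` repeated `m_i`
times), one of the terms in the defining sum of an exponential iterated integral. -/
def expWord {n : ℕ} (d : Fin (n + 1) → ℝ → ℂ) (f : Fin n → ℝ → ℂ)
    (m : Fin (n + 1) → ℕ) : List (ℝ → ℂ) :=
  (List.ofFn fun i : Fin n =>
      List.replicate (m i.castSucc) (d i.castSucc) ++ [f i]).flatten
    ++ List.replicate (m (Fin.last n)) (d (Fin.last n))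

/-- The exponential iterated integral `∫ e^{d_0} f_0 e^{d_1} f_1 ⋯ f_{n-1} e^{d_n}`
over `[a,b]`: the sum over all `(m_0, …, m_n) ∈ ℕ^{n+1}` of the iterated integrals
of the words `d_0^{m_0} f_0 d_1^{m_1} ⋯ f_{n-1} d_n^{m_n}`. -/
noncomputable def expItInt (a b : ℝ) {n : ℕ} (d : Fin (n + 1) → ℝ → ℂ)
    (f : Fin n → ℝ → ℂ) : ℂ :=
  ∑' m : Fin (n + 1) → ℕ, itIntL a b (expWord d f m)

/-!
Each term of the defining series is already invariant. Splitting off the first variable of the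
simplex (Fubini) gives `itIntL a b (g :: w) = ∫ s in a..b, g s * itIntL s b w`, so by induction on
the word the iterated integral of the pulled-back word over `[t, 1]` equals that of the original
word over `[φ t, 1]`, each step being the one-variable substitution `x = φ s`.
-/

lemma simplexSet_subset_Icc (a b : ℝ) (n : ℕ) :
    simplexSet a b n ⊆ Icc (fun _ => a) (fun _ => b) :=
  fun _ ht => ⟨fun i => (ht.1 i).1, fun i => (ht.1 i).2⟩

lemma isClosed_simplexSet (a b : ℝ) (n : ℕ) : IsClosed (simplexSet a b n) := by
  simp only [simplexSet, ofPred_and, ofPred_forall]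
  exact (isClosed_iInter fun i => (isClosed_le continuous_const (continuous_apply i)).inter
      (isClosed_le (continuous_apply i) continuous_const)).inter
    (isClosed_iInter fun i => isClosed_iInter fun j => isClosed_iInter fun _ =>
      isClosed_le (continuous_apply i) (continuous_apply j))

lemma isCompact_simplexSet (a b : ℝ) (n : ℕ) : IsCompact (simplexSet a b n) :=
  isCompact_Icc.of_isClosed_subset (isClosed_simplexSet a b n) (simplexSet_subset_Icc a b n)

lemma cons_mem_simplexSet_iff {a b s : ℝ} {n : ℕ} {t : Fin n → ℝ} :
    (Fin.cons s t : Fin (n + 1) → ℝ) ∈ simplexSet a b (n + 1) ↔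
      s ∈ Icc a b ∧ t ∈ simplexSet s b n := by
  constructor
  · rintro ⟨hIcc, hmono⟩
    exact ⟨hIcc 0, fun i => ⟨hmono 0 i.succ (Fin.zero_le _), (hIcc i.succ).2⟩,
      fun i j hij => hmono i.succ j.succ (Fin.succ_le_succ_iff.2 hij)⟩
  · rintro ⟨hs, ht, hmono⟩
    refine ⟨Fin.cases hs fun i => ⟨hs.1.trans (ht i).1, (ht i).2⟩, fun i j hij => ?_⟩
    cases i using Fin.cases with
    | zero => cases j using Fin.cases with
      | zero => exact le_rfl
      | succ j => exact (ht j).1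
    | succ i => cases j using Fin.cases with
      | zero => exact absurd hij (Fin.succ_pos i).not_ge
      | succ j => exact hmono i j (Fin.succ_le_succ_iff.1 hij)

lemma itIntL_nil (a b : ℝ) : itIntL a b [] = 1 := by
  simp [itIntL, simplexSet, volume_pi, measureReal_def]

lemma continuousOn_prod_get (a b : ℝ) (w : List (ℝ → ℂ))
    (hw : ∀ u ∈ w, ContinuousOn u (Icc a b)) :
    ContinuousOn (fun t => ∏ i : Fin w.length, w.get i (t i)) (simplexSet a b w.length) :=
  continuousOn_finsetProd _ fun i _ => (hw _ (List.get_mem w i)).comp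
    (continuous_apply i).continuousOn fun _ ht => ht.1 i

lemma itIntL_cons {a b : ℝ} {g : ℝ → ℂ} {w : List (ℝ → ℂ)} (hg : ContinuousOn g (Icc a b))
    (hw : ∀ u ∈ w, ContinuousOn u (Icc a b)) :
    itIntL a b (g :: w) = ∫ s in Icc a b, g s * itIntL s b w := by
  set n := w.length
  set F : (Fin (n + 1) → ℝ) → ℂ :=
    (simplexSet a b (n + 1)).indicator fun t => ∏ i, (g :: w).get i (t i) with hF_def
  have hF : Integrable F := by
    refine (integrable_indicator_iff (isClosed_simplexSet a b _).measurableSet).2 ?_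
    refine (continuousOn_prod_get a b (g :: w) ?_).integrableOn_compact
      (isCompact_simplexSet a b _)
    simpa using ⟨hg, hw⟩
  have hfiber : ∀ s t, F (Fin.insertNth 0 s t) = (Icc a b).indicator g s *
      (simplexSet s b n).indicator (fun t => ∏ i, w.get i (t i)) t := by
    intro s t
    have hprod : ∏ i, (g :: w).get i ((Fin.cons s t : Fin (n + 1) → ℝ) i) =
        g s * ∏ i, w.get i (t i) := Fin.prod_univ_succ _
    rw [Fin.insertNth_zero', hF_def]
    by_cases h : s ∈ Icc a b ∧ t ∈ simplexSet s b n
    · rw [indicator_of_mem (cons_mem_simplexSet_iff.2 h), indicator_of_mem h.1,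
        indicator_of_mem h.2, hprod]
    · rw [indicator_of_notMem (mt cons_mem_simplexSet_iff.1 h)]
      rcases not_and_or.1 h with h | h <;> simp [h]
  have hcons := (volume_preserving_piFinSuccAbove (fun _ : Fin (n + 1) => ℝ) 0).symm
  calc itIntL a b (g :: w) = ∫ x, F x :=
        (integral_indicator (isClosed_simplexSet a b _).measurableSet).symm
    _ = ∫ p : ℝ × (Fin n → ℝ), F (Fin.insertNth 0 p.1 p.2) := (hcons.integral_comp' F).symm
    _ = ∫ s, ∫ t, F (Fin.insertNth 0 s t) :=
        integral_prod _ (hcons.integrable_comp_of_integrable hF)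
    _ = ∫ s, (Icc a b).indicator (fun s => g s * itIntL s b w) s := by
      congr 1 with s
      rw [indicator_mul_left, itIntL,
        ← integral_indicator (isClosed_simplexSet _ _ _).measurableSet, ← integral_const_mul]
      simp only [hfiber]
      rfl
    _ = ∫ s in Icc a b, g s * itIntL s b w := integral_indicator measurableSet_Icc

lemma itIntL_cons_eq_intervalIntegral {a b : ℝ} (hab : a ≤ b) {g : ℝ → ℂ}
    {w : List (ℝ → ℂ)} (hg : ContinuousOn g (Icc a b)) (hw : ∀ u ∈ w, ContinuousOn u (Icc a b)) :
    itIntL a b (g :: w) = ∫ s in a..b, g s * itIntL s b w := by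
  rw [itIntL_cons hg hw, integral_Icc_eq_integral_Ioc, intervalIntegral.integral_of_le hab]

lemma continuousOn_itIntL {c b : ℝ} :
    ∀ w : List (ℝ → ℂ), (∀ u ∈ w, ContinuousOn u (Icc c b)) →
      ContinuousOn (fun a => itIntL a b w) (Icc c b)
  | [], _ => by simpa only [itIntL_nil] using continuousOn_const
  | g :: w, hw => by
    rw [List.forall_mem_cons] at hw
    obtain hcb | hbc := le_or_gt c b
    · have hint : IntegrableOn (fun s => g s * itIntL s b w) (uIcc c b) := by
        rw [uIcc_of_le hcb]
        exact (hw.1.mul (continuousOn_itIntL w hw.2)).integrableOn_Icc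
      have hprim := intervalIntegral.continuousOn_primitive_interval_left hint
      rw [uIcc_of_le hcb] at hprim
      have hsub : ∀ a ∈ Icc c b, Icc a b ⊆ Icc c b := fun a ha => Icc_subset_Icc_left ha.1
      refine hprim.congr fun a ha => itIntL_cons_eq_intervalIntegral ha.2 (hw.1.mono (hsub a ha))
        fun u hu => (hw.2 u hu).mono (hsub a ha)
    · simp [Icc_eq_empty_of_lt hbc]

def pullback (φ φ' : ℝ → ℝ) (u : ℝ → ℂ) : ℝ → ℂ := fun s => u (φ s) * φ' s

lemma ContinuousOn.pullback {a b a' b' : ℝ} {φ φ' : ℝ → ℝ} {u : ℝ → ℂ}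
    (hu : ContinuousOn u (Icc a' b')) (hφ : ContinuousOn φ (Icc a b))
    (hφ' : ContinuousOn φ' (Icc a b)) (hmaps : MapsTo φ (Icc a b) (Icc a' b')) :
    ContinuousOn (pullback φ φ' u) (Icc a b) :=
  (hu.comp hφ hmaps).mul (Complex.continuous_ofReal.comp_continuousOn hφ')

lemma itIntL_map_pullback {a b a' b' : ℝ} {φ φ' : ℝ → ℝ}
    (hφ : ∀ t ∈ Icc a b, HasDerivWithinAt φ (φ' t) (Icc a b) t)
    (hφ' : ContinuousOn φ' (Icc a b)) (hmaps : MapsTo φ (Icc a b) (Icc a' b')) (hb : φ b = b') :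
    ∀ w : List (ℝ → ℂ), (∀ u ∈ w, ContinuousOn u (Icc a' b')) →
      ∀ t ∈ Icc a b, itIntL t b (w.map (pullback φ φ')) = itIntL (φ t) b' w
  | [], _, t, _ => by simp only [List.map_nil, itIntL_nil]
  | g :: w, hw, t, ht => by
    rw [List.forall_mem_cons] at hw
    have hφc : ContinuousOn φ (Icc a b) := fun x hx => (hφ x hx).continuousWithinAt
    have hsub : Icc t b ⊆ Icc a b := Icc_subset_Icc_left ht.1
    have hsub' : Icc (φ t) b' ⊆ Icc a' b' := Icc_subset_Icc_left (hmaps ht).1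
    have ih := itIntL_map_pullback hφ hφ' hmaps hb w hw.2
    have hsubst : ∫ s in t..b, φ' s • ((fun x => g x * itIntL x b' w) ∘ φ) s =
        ∫ x in φ t..b', g x * itIntL x b' w := by
      rw [← hb]
      refine intervalIntegral.integral_deriv_smul_comp'' ?_ (fun x hx => ?_) ?_ ?_
      · rw [uIcc_of_le ht.2]; exact hφc.mono hsub
      · rw [min_eq_left ht.2, max_eq_right ht.2] at hx
        exact ((hφ x (hsub (Ioo_subset_Icc_self hx))).hasDerivAt
          (Icc_mem_nhds (ht.1.trans_lt hx.1) hx.2)).hasDerivWithinAt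
      · rw [uIcc_of_le ht.2]; exact hφ'.mono hsub
      · rw [uIcc_of_le ht.2, hb]
        exact (hw.1.mul (continuousOn_itIntL w hw.2)).mono
          (image_subset_iff.2 fun x hx => hmaps (hsub hx))
    rw [List.map_cons,
      itIntL_cons_eq_intervalIntegral ht.2 ((hw.1.pullback hφc hφ' hmaps).mono hsub)
        fun u hu => ?_, itIntL_cons_eq_intervalIntegral (hmaps ht).2 (hw.1.mono hsub')
        fun u hu => (hw.2 u hu).mono hsub', ← hsubst]
    · refine intervalIntegral.integral_congr fun s hs => ?_
      rw [uIcc_of_le ht.2] at hs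
      simp only [Function.comp_apply, pullback, ih s (hsub hs), Complex.real_smul]
      ring
    · obtain ⟨v, hv, rfl⟩ := List.mem_map.1 hu
      exact ((hw.2 v hv).pullback hφc hφ' hmaps).mono hsub

lemma expWord_map {n : ℕ} (p : (ℝ → ℂ) → ℝ → ℂ) (d : Fin (n + 1) → ℝ → ℂ)
    (f : Fin n → ℝ → ℂ) (m : Fin (n + 1) → ℕ) :
    expWord (fun i => p (d i)) (fun i => p (f i)) m = (expWord d f m).map p := by
  simp [expWord, List.map_flatten, List.map_ofFn, Function.comp_def]

lemma mem_expWord {n : ℕ} {d : Fin (n + 1) → ℝ → ℂ} {f : Fin n → ℝ → ℂ}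
    {m : Fin (n + 1) → ℕ} {u : ℝ → ℂ} (hu : u ∈ expWord d f m) :
    (∃ i, d i = u) ∨ ∃ i, f i = u := by
  simp only [expWord, List.mem_append, List.mem_flatten, List.mem_ofFn, List.mem_replicate] at hu
  aesop

/-- exponential iterated integrals are independent of the parametrization
of the path: pulling all the data back along a `C¹` monotone surjective reparametrization
`φ : [0,1] → [0,1]` does not change the integral. -/
theorem stmt6 {n : ℕ} (d : Fin (n + 1) → ℝ → ℂ) (f : Fin n → ℝ → ℂ)
    (hd : ∀ i, ContinuousOn (d i) (Icc (0 : ℝ) 1))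
    (hf : ∀ i, ContinuousOn (f i) (Icc (0 : ℝ) 1))
    (φ φ' : ℝ → ℝ)
    (hφ : ∀ t ∈ Icc (0 : ℝ) 1, HasDerivWithinAt φ (φ' t) (Icc (0 : ℝ) 1) t)
    (hφ' : ContinuousOn φ' (Icc (0 : ℝ) 1))
    (hmono : MonotoneOn φ (Icc (0 : ℝ) 1))
    (hφ0 : φ 0 = 0) (hφ1 : φ 1 = 1) :
    expItInt 0 1 (fun i t => d i (φ t) * (φ' t : ℂ))
        (fun i t => f i (φ t) * (φ' t : ℂ)) =
      expItInt 0 1 d f := by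
  have h0 : (0 : ℝ) ∈ Icc 0 1 := left_mem_Icc.2 zero_le_one
  have hmaps : MapsTo φ (Icc 0 1) (Icc 0 1) := fun t ht =>
    ⟨hφ0 ▸ hmono h0 ht ht.1, hφ1 ▸ hmono ht (right_mem_Icc.2 zero_le_one) ht.2⟩
  refine tsum_congr fun m => ?_
  have hw : ∀ u ∈ expWord d f m, ContinuousOn u (Icc 0 1) := fun u hu => by
    obtain ⟨i, rfl⟩ | ⟨i, rfl⟩ := mem_expWord hu
    exacts [hd i, hf i]
  have hword := itIntL_map_pullback hφ hφ' hmaps hφ1 _ hw 0 h0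
  rwa [hφ0, ← expWord_map] at hword
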